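/- Let Γ be a subgroup of A₄ × A₄ of order 12, and suppose it is not the case that both projection homomorphisms π₁ and π₂ restrict to isomorphisms from Γ onto A₄ (i.e. Γ is not the graph of an automorphism of A₄; in the paper this is phrased as Γ being not conjugate to the diagonal subgroup A₄^Δ or the twisted diagonal subgroup A₄^∇). Then Γ contains one of the 'basic' Klein four-subgroups V × {1} or {1} × V, where V is the Klein four-subgroup of A₄. -/
import Mathlib


/-- The alternating group `A₄` on four letters. -/
abbrev A4 : Type := alternatingGroup (Fin 4)

/-- The double transposition `(0 1)(2 3)` as an element of `A₄`. -/
def dt1 : A4 :=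
  ⟨Equiv.swap 0 1 * Equiv.swap 2 3, by rw [Equiv.Perm.mem_alternatingGroup]; decide⟩

/-- The double transposition `(0 2)(1 3)` as an element of `A₄`. -/
def dt2 : A4 :=
  ⟨Equiv.swap 0 2 * Equiv.swap 1 3, by rw [Equiv.Perm.mem_alternatingGroup]; decide⟩

/-- The Klein four-subgroup `V` of `A₄`, generated by the double transpositions: the unique
Sylow `2`-subgroup of `A₄`, consisting of the identity and the three double transpositions. -/
def V : Subgroup A4 := Subgroup.closure {dt1, dt2}

def Vset : Subgroup A4 where
  carrier := {a | a ^ 2 = 1}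
  one_mem' := by decide
  mul_mem' := by
    intro a b ha hb
    exact (by decide : ∀ a b : A4, a ^ 2 = 1 → b ^ 2 = 1 → (a * b) ^ 2 = 1) a b ha hb
  inv_mem' := by
    intro a ha
    exact (by decide : ∀ a : A4, a ^ 2 = 1 → a⁻¹ ^ 2 = 1) a ha

lemma mem_V_iff (a : A4) : a ∈ V ↔ a ^ 2 = 1 := by
  constructor
  · intro h
    have hle : V ≤ Vset := by
      rw [V, Subgroup.closure_le]
      rintro x hx
      rcases hx with rfl | rfl
      · exact (by decide : dt1 ^ 2 = 1)
      · exact (by decide : dt2 ^ 2 = 1)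
    exact hle h
  · intro h
    rcases (by decide : ∀ a : A4, a ^ 2 = 1 → a = 1 ∨ a = dt1 ∨ a = dt2 ∨ a = dt1 * dt2) a h with
      rfl | rfl | rfl | rfl
    · exact V.one_mem
    · exact Subgroup.subset_closure (by simp)
    · exact Subgroup.subset_closure (by simp)
    · exact V.mul_mem (Subgroup.subset_closure (by simp)) (Subgroup.subset_closure (by simp))

lemma card_le_of_finset (H : Subgroup A4) (S : Finset A4) (hS : ∀ x ∈ S, x ∈ H) :
    S.card ≤ Nat.card H := by
  have hsub : ↑S ⊆ (H : Set A4) := fun x hx => hS x (by exact_mod_cast hx)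
  calc S.card = (↑S : Set A4).ncard := (Set.ncard_coe_finset S).symm
    _ ≤ (H : Set A4).ncard := Set.ncard_le_ncard hsub (Set.toFinite _)
    _ = Nat.card H := (Nat.card_coe_set_eq _).symm

lemma card_V : Nat.card V = 4 := by
  have h : (V : Set A4) = (({1, dt1, dt2, dt1 * dt2} : Finset A4) : Set A4) := by
    ext a
    rw [SetLike.mem_coe, mem_V_iff, Finset.mem_coe]
    exact (by decide : ∀ a : A4, a ^ 2 = 1 ↔ a ∈ ({1, dt1, dt2, dt1 * dt2} : Finset A4)) a
  calc Nat.card V = (V : Set A4).ncard := Nat.card_coe_set_eq _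
    _ = (({1, dt1, dt2, dt1 * dt2} : Finset A4) : Set A4).ncard := by rw [h]
    _ = ({1, dt1, dt2, dt1 * dt2} : Finset A4).card := Set.ncard_coe_finset _
    _ = 4 := by decide

lemma card_A4 : Nat.card A4 = 12 := by
  rw [Nat.card_eq_fintype_card]; decide

lemma eq_V_of_card_four (H : Subgroup A4) (h4 : Nat.card H = 4) : H = V := by
  have hle : H ≤ V := by
    intro x hx
    rw [mem_V_iff]
    have h4' : x ^ 4 = 1 := by
      have h := pow_card_eq_one' (G := H) (x := ⟨x, hx⟩)
      rw [h4] at h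
      exact congrArg Subtype.val h
    exact (by decide : ∀ x : A4, x ^ 4 = 1 → x ^ 2 = 1) x h4'
  exact Subgroup.eq_of_le_of_card_ge hle (by rw [card_V, h4])

lemma no_card_six (H : Subgroup A4) : Nat.card H ≠ 6 := by
  intro h6
  obtain ⟨t, ht⟩ := exists_prime_orderOf_dvd_card' (G := H) 2 (by rw [h6]; norm_num)
  obtain ⟨c, hc⟩ := exists_prime_orderOf_dvd_card' (G := H) 3 (by rw [h6]; norm_num)
  have ht2 : (t : A4) ^ 2 = 1 := by
    have := pow_orderOf_eq_one t; rw [ht] at this; exact congrArg Subtype.val this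
  have ht1 : (t : A4) ≠ 1 := by
    intro h; rw [show (1 : A4) = ((1 : H) : A4) from rfl] at h
    have := Subtype.val_injective h; rw [this] at ht; simp at ht
  have hc3 : (c : A4) ^ 3 = 1 := by
    have := pow_orderOf_eq_one c; rw [hc] at this; exact congrArg Subtype.val this
  have hc1 : (c : A4) ≠ 1 := by
    intro h; rw [show (1 : A4) = ((1 : H) : A4) from rfl] at h
    have := Subtype.val_injective h; rw [this] at hc; simp at hc
  set x := (c : A4)
  set y := (t : A4)
  have hcard : ({1, x, x ^ 2, y, x * y * x⁻¹, x⁻¹ * y * x, y * x} : Finset A4).card = 7 :=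
    (by decide : ∀ x y : A4, x ^ 3 = 1 → x ≠ 1 → y ^ 2 = 1 → y ≠ 1 →
      ({1, x, x ^ 2, y, x * y * x⁻¹, x⁻¹ * y * x, y * x} : Finset A4).card = 7) x y hc3 hc1 ht2 ht1
  have hmem : ∀ z ∈ ({1, x, x ^ 2, y, x * y * x⁻¹, x⁻¹ * y * x, y * x} : Finset A4), z ∈ H := by
    intro z hz
    have hx : x ∈ H := c.2
    have hy : y ∈ H := t.2
    simp only [Finset.mem_insert, Finset.mem_singleton] at hz
    rcases hz with rfl | rfl | rfl | rfl | rfl | rfl | rfl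
    · exact H.one_mem
    · exact hx
    · exact H.pow_mem hx 2
    · exact hy
    · exact H.mul_mem (H.mul_mem hx hy) (H.inv_mem hx)
    · exact H.mul_mem (H.mul_mem (H.inv_mem hx) hy) hx
    · exact H.mul_mem hy hx
  have := card_le_of_finset H _ hmem
  omega

lemma no_normal_card_three (N : Subgroup A4) (h3 : Nat.card N = 3)
    (hn : ∀ g : A4, ∀ x ∈ N, g * x * g⁻¹ ∈ N) : False := by
  obtain ⟨c, hcN, hc1⟩ : ∃ c ∈ (N : Subgroup A4), c ≠ 1 := by
    rcases N.bot_or_exists_ne_one with hb | h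
    · rw [hb, Subgroup.card_bot] at h3; omega
    · exact h
  have hc3 : c ^ 3 = 1 := by
    have h := pow_card_eq_one' (G := N) (x := ⟨c, hcN⟩)
    rw [h3] at h
    exact congrArg Subtype.val h
  obtain ⟨g, hg⟩ := (by decide : ∀ c : A4, c ^ 3 = 1 → c ≠ 1 →
    ∃ g : A4, ({1, c, c ^ 2, g * c * g⁻¹} : Finset A4).card = 4) c hc3 hc1
  have hmem : ∀ z ∈ ({1, c, c ^ 2, g * c * g⁻¹} : Finset A4), z ∈ N := by
    intro z hz
    simp only [Finset.mem_insert, Finset.mem_singleton] at hz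
    rcases hz with rfl | rfl | rfl | rfl
    · exact N.one_mem
    · exact hcN
    · exact N.pow_mem hcN 2
    · exact hn g c hcN
  have := card_le_of_finset N _ hmem
  omega

lemma card_snd (Γ : Subgroup (A4 × A4)) :
    Nat.card Γ = Nat.card (Γ.comap (MonoidHom.inl A4 A4)) * Nat.card (Γ.map (MonoidHom.snd A4 A4)) := by
  set f : ↥Γ →* A4 := (MonoidHom.snd A4 A4).comp Γ.subtype with hf
  have hrange : f.range = Γ.map (MonoidHom.snd A4 A4) := by
    ext x
    constructor
    · rintro ⟨⟨y, hy⟩, rfl⟩; exact ⟨y, hy, rfl⟩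
    · rintro ⟨y, hy, rfl⟩; exact ⟨⟨y, hy⟩, rfl⟩
  have hker : Nat.card f.ker = Nat.card (Γ.comap (MonoidHom.inl A4 A4)) := by
    refine Nat.card_congr ⟨fun k => ⟨((k : ↥Γ) : A4 × A4).1, ?_⟩,
      fun a => ⟨⟨((a : A4), 1), a.2⟩, rfl⟩, fun k => ?_, fun a => rfl⟩
    · have hx2 : ((k : ↥Γ) : A4 × A4).2 = 1 := k.2
      show ((((k : ↥Γ) : A4 × A4).1, (1 : A4)) : A4 × A4) ∈ Γ
      rw [← hx2]
      exact (k : ↥Γ).2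
    · apply Subtype.ext; apply Subtype.ext
      have hx2 : ((k : ↥Γ) : A4 × A4).2 = 1 := k.2
      exact Prod.ext rfl hx2.symm
  calc Nat.card Γ = Nat.card (↥Γ ⧸ f.ker) * Nat.card f.ker :=
        Subgroup.card_eq_card_quotient_mul_card_subgroup f.ker
    _ = Nat.card f.range * Nat.card f.ker := by
        rw [Nat.card_congr (QuotientGroup.quotientKerEquivRange f).toEquiv]
    _ = _ := by rw [hrange, hker, mul_comm]

lemma card_fst (Γ : Subgroup (A4 × A4)) :
    Nat.card Γ = Nat.card (Γ.comap (MonoidHom.inr A4 A4)) * Nat.card (Γ.map (MonoidHom.fst A4 A4)) := by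
  set f : ↥Γ →* A4 := (MonoidHom.fst A4 A4).comp Γ.subtype with hf
  have hrange : f.range = Γ.map (MonoidHom.fst A4 A4) := by
    ext x
    constructor
    · rintro ⟨⟨y, hy⟩, rfl⟩; exact ⟨y, hy, rfl⟩
    · rintro ⟨y, hy, rfl⟩; exact ⟨⟨y, hy⟩, rfl⟩
  have hker : Nat.card f.ker = Nat.card (Γ.comap (MonoidHom.inr A4 A4)) := by
    refine Nat.card_congr ⟨fun k => ⟨((k : ↥Γ) : A4 × A4).2, ?_⟩,
      fun a => ⟨⟨((1 : A4), (a : A4)), a.2⟩, rfl⟩, fun k => ?_, fun a => rfl⟩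
    · have hx1 : ((k : ↥Γ) : A4 × A4).1 = 1 := k.2
      show (((1 : A4), ((k : ↥Γ) : A4 × A4).2) : A4 × A4) ∈ Γ
      rw [← hx1]
      exact (k : ↥Γ).2
    · apply Subtype.ext; apply Subtype.ext
      have hx1 : ((k : ↥Γ) : A4 × A4).1 = 1 := k.2
      exact Prod.ext hx1.symm rfl
  calc Nat.card Γ = Nat.card (↥Γ ⧸ f.ker) * Nat.card f.ker :=
        Subgroup.card_eq_card_quotient_mul_card_subgroup f.ker
    _ = Nat.card f.range * Nat.card f.ker := by
        rw [Nat.card_congr (QuotientGroup.quotientKerEquivRange f).toEquiv]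
    _ = _ := by rw [hrange, hker, mul_comm]

lemma main_right (Γ : Subgroup (A4 × A4)) (h12 : Nat.card Γ = 12)
    (hn : Nat.card (Γ.comap (MonoidHom.inr A4 A4)) ≠ 1) :
    V.prod (⊥ : Subgroup A4) ≤ Γ ∨ (⊥ : Subgroup A4).prod V ≤ Γ := by
  have e1 : Nat.card (Γ.comap (MonoidHom.inr A4 A4)) * Nat.card (Γ.map (MonoidHom.fst A4 A4)) = 12 := by
    rw [← card_fst Γ, h12]
  have e2 : Nat.card (Γ.comap (MonoidHom.inl A4 A4)) * Nat.card (Γ.map (MonoidHom.snd A4 A4)) = 12 := by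
    rw [← card_snd Γ, h12]
  have h6N2 := no_card_six (Γ.comap (MonoidHom.inr A4 A4))
  have hdvd : Nat.card (Γ.comap (MonoidHom.inr A4 A4)) ∣ 12 := ⟨_, e1.symm⟩
  have hmem : Nat.card (Γ.comap (MonoidHom.inr A4 A4)) ∈ Nat.divisors 12 :=
    Nat.mem_divisors.mpr ⟨hdvd, by norm_num⟩
  rw [show Nat.divisors 12 = {1, 2, 3, 4, 6, 12} from rfl] at hmem
  simp only [Finset.mem_insert, Finset.mem_singleton] at hmem
  have hcases : Nat.card (Γ.comap (MonoidHom.inr A4 A4)) = 2 ∨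
      Nat.card (Γ.comap (MonoidHom.inr A4 A4)) = 3 ∨
      Nat.card (Γ.comap (MonoidHom.inr A4 A4)) = 4 ∨
      Nat.card (Γ.comap (MonoidHom.inr A4 A4)) = 12 := by omega
  rcases hcases with h2 | h3 | h4 | h12'
  · -- card N2 = 2 so card H1 = 6, impossible
    rw [h2] at e1
    exact absurd (by omega : Nat.card (Γ.map (MonoidHom.fst A4 A4)) = 6) (no_card_six _)
  · -- card N2 = 3, so card H1 = 4, H1 = V
    have hH1 : Nat.card (Γ.map (MonoidHom.fst A4 A4)) = 4 := by rw [h3] at e1; omega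
    have hN1le : Γ.comap (MonoidHom.inl A4 A4) ≤ Γ.map (MonoidHom.fst A4 A4) := by
      intro a ha
      exact ⟨(a, 1), ha, rfl⟩
    have hN1dvd : Nat.card (Γ.comap (MonoidHom.inl A4 A4)) ∣ 4 := by
      have h := Subgroup.card_dvd_of_le hN1le
      rw [hH1] at h; exact h
    have hN1cases : Nat.card (Γ.comap (MonoidHom.inl A4 A4)) = 1 ∨
        Nat.card (Γ.comap (MonoidHom.inl A4 A4)) = 2 ∨
        Nat.card (Γ.comap (MonoidHom.inl A4 A4)) = 4 := by
      have hm : Nat.card (Γ.comap (MonoidHom.inl A4 A4)) ∈ Nat.divisors 4 :=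
        Nat.mem_divisors.mpr ⟨hN1dvd, by norm_num⟩
      rw [show Nat.divisors 4 = {1, 2, 4} from rfl] at hm
      simpa only [Finset.mem_insert, Finset.mem_singleton] using hm
    rcases hN1cases with hn1 | hn1 | hn1
    · -- card H2 = 12, H2 = ⊤, N2 normal of order 3 in A4 : contradiction
      exfalso
      have hH2 : Nat.card (Γ.map (MonoidHom.snd A4 A4)) = 12 := by rw [hn1] at e2; omega
      have htop : Γ.map (MonoidHom.snd A4 A4) = ⊤ :=
        Subgroup.eq_top_of_card_eq _ (by rw [hH2, card_A4])
      refine no_normal_card_three (Γ.comap (MonoidHom.inr A4 A4)) h3 ?_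
      intro g x hx
      have hg : g ∈ Γ.map (MonoidHom.snd A4 A4) := by rw [htop]; trivial
      obtain ⟨p, hp, hp2⟩ := hg
      have hmul : p * (((1 : A4), x) : A4 × A4) * p⁻¹ ∈ Γ :=
        Γ.mul_mem (Γ.mul_mem hp hx) (Γ.inv_mem hp)
      have heq : (p * (((1 : A4), x) : A4 × A4) * p⁻¹ : A4 × A4) = ((1 : A4), g * x * g⁻¹) := by
        rw [← hp2]
        refine Prod.ext ?_ rfl
        show p.1 * 1 * p.1⁻¹ = 1
        simp
      show (((1 : A4), g * x * g⁻¹) : A4 × A4) ∈ Γ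
      rw [← heq]
      exact hmul
    · -- card H2 = 6 : impossible
      rw [hn1] at e2
      exact absurd (by omega : Nat.card (Γ.map (MonoidHom.snd A4 A4)) = 6) (no_card_six _)
    · -- N1 = V
      left
      have hV : Γ.comap (MonoidHom.inl A4 A4) = V := eq_V_of_card_four _ hn1
      rintro ⟨a, b⟩ hab
      rw [Subgroup.mem_prod] at hab
      obtain ⟨ha, hb⟩ := hab
      rw [Subgroup.mem_bot] at hb
      subst hb
      rw [← hV] at ha
      exact ha
  · -- N2 = V
    right
    have hV : Γ.comap (MonoidHom.inr A4 A4) = V := eq_V_of_card_four _ h4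
    rintro ⟨a, b⟩ hab
    rw [Subgroup.mem_prod] at hab
    obtain ⟨ha, hb⟩ := hab
    rw [Subgroup.mem_bot] at ha
    subst ha
    rw [← hV] at hb
    exact hb
  · -- N2 = ⊤
    right
    have htop : Γ.comap (MonoidHom.inr A4 A4) = ⊤ :=
      Subgroup.eq_top_of_card_eq _ (by rw [h12', card_A4])
    rintro ⟨a, b⟩ hab
    rw [Subgroup.mem_prod] at hab
    obtain ⟨ha, hb⟩ := hab
    rw [Subgroup.mem_bot] at ha
    subst ha
    have : b ∈ Γ.comap (MonoidHom.inr A4 A4) := by rw [htop]; trivial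
    exact this

lemma main_left (Γ : Subgroup (A4 × A4)) (h12 : Nat.card Γ = 12)
    (hn : Nat.card (Γ.comap (MonoidHom.inl A4 A4)) ≠ 1) :
    V.prod (⊥ : Subgroup A4) ≤ Γ ∨ (⊥ : Subgroup A4).prod V ≤ Γ := by
  have e1 : Nat.card (Γ.comap (MonoidHom.inl A4 A4)) * Nat.card (Γ.map (MonoidHom.snd A4 A4)) = 12 := by
    rw [← card_snd Γ, h12]
  have e2 : Nat.card (Γ.comap (MonoidHom.inr A4 A4)) * Nat.card (Γ.map (MonoidHom.fst A4 A4)) = 12 := by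
    rw [← card_fst Γ, h12]
  have h6N1 := no_card_six (Γ.comap (MonoidHom.inl A4 A4))
  have hdvd : Nat.card (Γ.comap (MonoidHom.inl A4 A4)) ∣ 12 := ⟨_, e1.symm⟩
  have hmem : Nat.card (Γ.comap (MonoidHom.inl A4 A4)) ∈ Nat.divisors 12 :=
    Nat.mem_divisors.mpr ⟨hdvd, by norm_num⟩
  rw [show Nat.divisors 12 = {1, 2, 3, 4, 6, 12} from rfl] at hmem
  simp only [Finset.mem_insert, Finset.mem_singleton] at hmem
  have hcases : Nat.card (Γ.comap (MonoidHom.inl A4 A4)) = 2 ∨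
      Nat.card (Γ.comap (MonoidHom.inl A4 A4)) = 3 ∨
      Nat.card (Γ.comap (MonoidHom.inl A4 A4)) = 4 ∨
      Nat.card (Γ.comap (MonoidHom.inl A4 A4)) = 12 := by omega
  rcases hcases with h2 | h3 | h4 | h12'
  · rw [h2] at e1
    exact absurd (by omega : Nat.card (Γ.map (MonoidHom.snd A4 A4)) = 6) (no_card_six _)
  · have hH2 : Nat.card (Γ.map (MonoidHom.snd A4 A4)) = 4 := by rw [h3] at e1; omega
    have hN2le : Γ.comap (MonoidHom.inr A4 A4) ≤ Γ.map (MonoidHom.snd A4 A4) := by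
      intro a ha
      exact ⟨(1, a), ha, rfl⟩
    have hN2dvd : Nat.card (Γ.comap (MonoidHom.inr A4 A4)) ∣ 4 := by
      have h := Subgroup.card_dvd_of_le hN2le
      rw [hH2] at h; exact h
    have hN2cases : Nat.card (Γ.comap (MonoidHom.inr A4 A4)) = 1 ∨
        Nat.card (Γ.comap (MonoidHom.inr A4 A4)) = 2 ∨
        Nat.card (Γ.comap (MonoidHom.inr A4 A4)) = 4 := by
      have hm : Nat.card (Γ.comap (MonoidHom.inr A4 A4)) ∈ Nat.divisors 4 :=
        Nat.mem_divisors.mpr ⟨hN2dvd, by norm_num⟩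
      rw [show Nat.divisors 4 = {1, 2, 4} from rfl] at hm
      simpa only [Finset.mem_insert, Finset.mem_singleton] using hm
    rcases hN2cases with hn2 | hn2 | hn2
    · exfalso
      have hH1 : Nat.card (Γ.map (MonoidHom.fst A4 A4)) = 12 := by rw [hn2] at e2; omega
      have htop : Γ.map (MonoidHom.fst A4 A4) = ⊤ :=
        Subgroup.eq_top_of_card_eq _ (by rw [hH1, card_A4])
      refine no_normal_card_three (Γ.comap (MonoidHom.inl A4 A4)) h3 ?_
      intro g x hx
      have hg : g ∈ Γ.map (MonoidHom.fst A4 A4) := by rw [htop]; trivial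
      obtain ⟨p, hp, hp1⟩ := hg
      have hmul : p * ((x, (1 : A4)) : A4 × A4) * p⁻¹ ∈ Γ :=
        Γ.mul_mem (Γ.mul_mem hp hx) (Γ.inv_mem hp)
      have heq : (p * ((x, (1 : A4)) : A4 × A4) * p⁻¹ : A4 × A4) = (g * x * g⁻¹, (1 : A4)) := by
        rw [← hp1]
        refine Prod.ext rfl ?_
        show p.2 * 1 * p.2⁻¹ = 1
        simp
      show ((g * x * g⁻¹, (1 : A4)) : A4 × A4) ∈ Γ
      rw [← heq]
      exact hmul
    · rw [hn2] at e2
      exact absurd (by omega : Nat.card (Γ.map (MonoidHom.fst A4 A4)) = 6) (no_card_six _)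
    · right
      have hV : Γ.comap (MonoidHom.inr A4 A4) = V := eq_V_of_card_four _ hn2
      rintro ⟨a, b⟩ hab
      rw [Subgroup.mem_prod] at hab
      obtain ⟨ha, hb⟩ := hab
      rw [Subgroup.mem_bot] at ha
      subst ha
      rw [← hV] at hb
      exact hb
  · left
    have hV : Γ.comap (MonoidHom.inl A4 A4) = V := eq_V_of_card_four _ h4
    rintro ⟨a, b⟩ hab
    rw [Subgroup.mem_prod] at hab
    obtain ⟨ha, hb⟩ := hab
    rw [Subgroup.mem_bot] at hb
    subst hb
    rw [← hV] at ha
    exact ha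
  · left
    have htop : Γ.comap (MonoidHom.inl A4 A4) = ⊤ :=
      Subgroup.eq_top_of_card_eq _ (by rw [h12', card_A4])
    rintro ⟨a, b⟩ hab
    rw [Subgroup.mem_prod] at hab
    obtain ⟨ha, hb⟩ := hab
    rw [Subgroup.mem_bot] at hb
    subst hb
    have : a ∈ Γ.comap (MonoidHom.inl A4 A4) := by rw [htop]; trivial
    exact this

/-- Let `Γ` be a subgroup of `A₄ × A₄` of order `12` which is not the graph of an automorphism
of `A₄` (i.e. it is not the case that both projections restrict to bijections from `Γ` onto
`A₄`). Then `Γ` contains one of the basic Klein four-subgroups `V × {1}` or `{1} × V`. -/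
theorem A4_prod_A4_subgroup_order_twelve_contains_basic_klein
    (Γ : Subgroup (A4 × A4)) (h : Nat.card Γ = 12)
    (hnd : ¬ (Function.Bijective (fun γ : Γ => (γ : A4 × A4).1) ∧
      Function.Bijective (fun γ : Γ => (γ : A4 × A4).2))) :
    V.prod (⊥ : Subgroup A4) ≤ Γ ∨ (⊥ : Subgroup A4).prod V ≤ Γ := by
  by_cases h1 : Nat.card (Γ.comap (MonoidHom.inl A4 A4)) = 1
  · by_cases h2 : Nat.card (Γ.comap (MonoidHom.inr A4 A4)) = 1
    · exfalso
      apply hnd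
      have hb1 : (Γ.comap (MonoidHom.inl A4 A4)) = ⊥ := Subgroup.card_eq_one.mp h1
      have hb2 : (Γ.comap (MonoidHom.inr A4 A4)) = ⊥ := Subgroup.card_eq_one.mp h2
      have e1 : Nat.card (Γ.map (MonoidHom.fst A4 A4)) = 12 := by
        have hc := card_fst Γ; rw [h, h2, one_mul] at hc; omega
      have e2 : Nat.card (Γ.map (MonoidHom.snd A4 A4)) = 12 := by
        have hc := card_snd Γ; rw [h, h1, one_mul] at hc; omega
      have htop1 : Γ.map (MonoidHom.fst A4 A4) = ⊤ :=
        Subgroup.eq_top_of_card_eq _ (by rw [e1, card_A4])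
      have htop2 : Γ.map (MonoidHom.snd A4 A4) = ⊤ :=
        Subgroup.eq_top_of_card_eq _ (by rw [e2, card_A4])
      constructor
      · constructor
        · intro γ γ' heq
          simp only at heq
          have hm : ((γ : A4 × A4) * (γ' : A4 × A4)⁻¹) ∈ Γ := Γ.mul_mem γ.2 (Γ.inv_mem γ'.2)
          have hfst : ((γ : A4 × A4).1 * ((γ' : A4 × A4).1)⁻¹ : A4) = 1 := by
            rw [heq]; simp
          have hy : ((γ : A4 × A4).2 * ((γ' : A4 × A4).2)⁻¹) ∈ Γ.comap (MonoidHom.inr A4 A4) := by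
            show (((1 : A4), (γ : A4 × A4).2 * ((γ' : A4 × A4).2)⁻¹) : A4 × A4) ∈ Γ
            rw [← hfst]
            exact hm
          rw [hb2, Subgroup.mem_bot] at hy
          exact Subtype.ext (Prod.ext heq (mul_inv_eq_one.mp hy))
        · intro a
          have ha : a ∈ Γ.map (MonoidHom.fst A4 A4) := by rw [htop1]; trivial
          obtain ⟨p, hp, hpa⟩ := ha
          exact ⟨⟨p, hp⟩, hpa⟩
      · constructor
        · intro γ γ' heq
          simp only at heq
          have hm : ((γ : A4 × A4) * (γ' : A4 × A4)⁻¹) ∈ Γ := Γ.mul_mem γ.2 (Γ.inv_mem γ'.2)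
          have hsnd : ((γ : A4 × A4).2 * ((γ' : A4 × A4).2)⁻¹ : A4) = 1 := by
            rw [heq]; simp
          have hy : ((γ : A4 × A4).1 * ((γ' : A4 × A4).1)⁻¹) ∈ Γ.comap (MonoidHom.inl A4 A4) := by
            show ((((γ : A4 × A4).1 * ((γ' : A4 × A4).1)⁻¹, (1 : A4))) : A4 × A4) ∈ Γ
            rw [← hsnd]
            exact hm
          rw [hb1, Subgroup.mem_bot] at hy
          exact Subtype.ext (Prod.ext (mul_inv_eq_one.mp hy) heq)
        · intro a
          have ha : a ∈ Γ.map (MonoidHom.snd A4 A4) := by rw [htop2]; trivial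
          obtain ⟨p, hp, hpa⟩ := ha
          exact ⟨⟨p, hp⟩, hpa⟩
    · exact main_right Γ h h2
  · exact main_left Γ h h1
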